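/- arXiv:2512.19421 — 3 statements merged into one kernel-verified Lean document; each statement's English description precedes it below -/
import Mathlib

section
/- Let q > 1 and C = C(q) a suitable constant. Define g_+^q(l,k) = (q-1) ∫_k^l |s|^{q-2} (s-k)_+ ds for l ≥ k (and 0 otherwise). Then for all real l, k: (1/C)(|l|+|k|)^{q-2}(l-k)_+^2 ≤ g_+^q(l,k) ≤ C(|l|+|k|)^{q-2}(l-k)_+^2. -/
open MeasureTheory

open intervalIntegral Set
set_option maxHeartbeats 1000000

namespace GplusAux

lemma int_abs_rpow {p : ℝ} (hp : -1 < p) (a b : ℝ) :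
    IntervalIntegrable (fun s : ℝ => |s| ^ p) volume a b := by
  suffices H : ∀ c : ℝ, 0 ≤ c → IntervalIntegrable (fun s : ℝ => |s| ^ p) volume 0 c by
    have H' : ∀ c : ℝ, IntervalIntegrable (fun s : ℝ => |s| ^ p) volume 0 c := by
      intro c
      rcases le_total 0 c with hc | hc
      · exact H c hc
      · rw [IntervalIntegrable.iff_comp_neg]
        simp only [abs_neg, neg_zero]
        exact H (-c) (by linarith)
    exact (H' a).symm.trans (H' b)
  intro c hc
  rw [intervalIntegrable_iff]
  have h1 : IntegrableOn (fun x : ℝ => x ^ p) (Set.uIoc (0:ℝ) c) volume := by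
    rw [← intervalIntegrable_iff]
    exact intervalIntegral.intervalIntegrable_rpow' hp
  refine h1.congr_fun ?_ measurableSet_uIoc
  intro x hx
  rw [Set.uIoc_of_le hc] at hx
  show x ^ p = |x| ^ p
  rw [abs_of_pos hx.1]

lemma int_f {p : ℝ} (hp : -1 < p) (k a b : ℝ) :
    IntervalIntegrable (fun s : ℝ => |s| ^ p * max (s - k) 0) volume a b :=
  (int_abs_rpow hp a b).mul_continuousOn
    (((continuous_id.sub continuous_const).max continuous_const).continuousOn)

lemma mono_off_zero {f g : ℝ → ℝ} {a b : ℝ} (hab : a ≤ b)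
    (hf : IntervalIntegrable f volume a b) (hg : IntervalIntegrable g volume a b)
    (h : ∀ x ∈ Icc a b, x ≠ 0 → f x ≤ g x) :
    ∫ x in a..b, f x ≤ ∫ x in a..b, g x := by
  refine intervalIntegral.integral_mono_ae_restrict hab hf hg ?_
  have h0 : ∀ᵐ (x : ℝ) ∂(volume.restrict (Icc a b)), x ≠ 0 := by
    refine ae_restrict_of_ae ?_
    have he : {x : ℝ | ¬ x ≠ 0} = {0} := by ext x; simp
    rw [ae_iff, he]
    exact Real.volume_singleton
  filter_upwards [h0, ae_restrict_mem measurableSet_Icc] with x h1 h2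
  exact h x h2 h1

lemma int_linear (a b k : ℝ) : (∫ s in a..b, (s - k)) = (b - k)^2 / 2 - (a - k)^2 / 2 := by
  have h := intervalIntegral.integral_comp_sub_right (a := a) (b := b) (fun x : ℝ => x) k
  rw [h, integral_id]
  ring

lemma rpow_int_shift {p : ℝ} (hp : -1 < p) (hp0 : p < 0) {k l : ℝ} (hk : 0 ≤ k) (hkl : k ≤ l) :
    (∫ s in k..l, |s| ^ p) ≤ (l - k) ^ (p + 1) / (p + 1) := by
  have hcongr : (∫ s in k..l, |s| ^ p) = ∫ s in k..l, s ^ p := by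
    apply intervalIntegral.integral_congr
    intro x hx
    rw [Set.uIcc_of_le hkl] at hx
    simp only
    rw [abs_of_nonneg (hk.trans hx.1)]
  rw [hcongr]
  have hshift : (∫ s in k..l, s ^ p) = ∫ s in (0:ℝ)..(l - k), (s + k) ^ p := by
    rw [intervalIntegral.integral_comp_add_right (fun x : ℝ => x ^ p) k]
    norm_num
  rw [hshift]
  have hint2 : IntervalIntegrable (fun s : ℝ => (s + k) ^ p) volume 0 (l - k) := by
    have := (intervalIntegral.intervalIntegrable_rpow' (a := k) (b := l) hp).comp_add_right k
    simpa using this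
  have hle : (∫ s in (0:ℝ)..(l-k), (s + k) ^ p) ≤ ∫ s in (0:ℝ)..(l-k), s ^ p := by
    apply mono_off_zero (by linarith) hint2 (intervalIntegral.intervalIntegrable_rpow' hp)
    intro x hx hx0
    have hx1 : 0 < x := lt_of_le_of_ne hx.1 (Ne.symm hx0)
    exact Real.rpow_le_rpow_of_nonpos hx1 (by linarith) hp0.le
  refine hle.trans (le_of_eq ?_)
  rw [integral_rpow (Or.inl hp)]
  rw [Real.zero_rpow (by linarith : p + 1 ≠ 0)]
  ring

lemma rpow_int_total {p : ℝ} (hp : -1 < p) (hp0 : p < 0) {k l : ℝ} (hkl : k ≤ l) :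
    (∫ s in k..l, |s| ^ p) ≤ 2 * ((l - k) ^ (p + 1) / (p + 1)) := by
  have hp1 : 0 < p + 1 := by linarith
  have habs : ∀ a : ℝ, 0 ≤ a → (0:ℝ) ≤ a ^ (p+1) / (p+1) := fun a ha =>
    div_nonneg (Real.rpow_nonneg ha _) hp1.le
  rcases le_total 0 k with hk | hk
  · have h := rpow_int_shift hp hp0 hk hkl
    linarith [habs (l - k) (by linarith)]
  rcases le_total l 0 with hl | hl
  · have hrefl : (∫ s in k..l, |s| ^ p) = ∫ s in (-l)..(-k), |s| ^ p := by
      have h := intervalIntegral.integral_comp_neg (a := k) (b := l) (fun s : ℝ => |s| ^ p)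
      simp only [abs_neg] at h
      exact h
    rw [hrefl]
    have h := rpow_int_shift hp hp0 (by linarith : (0:ℝ) ≤ -l) (by linarith : -l ≤ -k)
    have he : -k - -l = l - k := by ring
    rw [he] at h
    linarith [habs (l - k) (by linarith)]
  · have hsplit : (∫ s in k..(0:ℝ), |s| ^ p) + (∫ s in (0:ℝ)..l, |s| ^ p)
        = ∫ s in k..l, |s| ^ p :=
      intervalIntegral.integral_add_adjacent_intervals (int_abs_rpow hp k 0) (int_abs_rpow hp 0 l)
    have h1 : (∫ s in (0:ℝ)..l, |s| ^ p) ≤ (l - k) ^ (p+1) / (p+1) := by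
      have h := rpow_int_shift hp hp0 (le_refl (0:ℝ)) hl
      rw [sub_zero] at h
      refine h.trans ((div_le_div_iff_of_pos_right hp1).2 (Real.rpow_le_rpow hl (by linarith) hp1.le))
    have h2 : (∫ s in k..(0:ℝ), |s| ^ p) ≤ (l - k) ^ (p+1) / (p+1) := by
      have hrefl : (∫ s in k..(0:ℝ), |s| ^ p) = ∫ s in (0:ℝ)..(-k), |s| ^ p := by
        have h := intervalIntegral.integral_comp_neg (a := k) (b := (0:ℝ)) (fun s : ℝ => |s| ^ p)
        simp only [abs_neg, neg_zero] at h
        exact h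
      rw [hrefl]
      have h := rpow_int_shift hp hp0 (le_refl (0:ℝ)) (by linarith : (0:ℝ) ≤ -k)
      rw [sub_zero] at h
      refine h.trans ((div_le_div_iff_of_pos_right hp1).2 (Real.rpow_le_rpow (by linarith) (by linarith) hp1.le))
    linarith

end GplusAux
open GplusAux in
/-- Comparison bounds for `g₊^q(l,k) = (q-1) ∫_k^l |s|^{q-2} (s-k)₊ ds`. -/
theorem stmt_0 (q : ℝ) (hq : 1 < q) :
    ∃ C : ℝ, 0 < C ∧ ∀ l k : ℝ,
      (1 / C) * (|l| + |k|) ^ (q - 2) * (max (l - k) 0) ^ 2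
          ≤ (q - 1) * ∫ s in k..l, |s| ^ (q - 2) * max (s - k) 0 ∧
      (q - 1) * (∫ s in k..l, |s| ^ (q - 2) * max (s - k) 0)
          ≤ C * (|l| + |k|) ^ (q - 2) * (max (l - k) 0) ^ 2 := by
  have hq1 : 0 < q - 1 := by linarith
  set p : ℝ := q - 2 with hpdef
  have hp : -1 < p := by rw [hpdef]; linarith
  set c₀ : ℝ := (4:ℝ) ^ (-|p|) / 32 with hc0def
  have hc0 : 0 < c₀ := div_pos (Real.rpow_pos_of_pos (by norm_num) _) (by norm_num)
  set c₁ : ℝ := 2 + 8 / (q - 1) with hc1def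
  have hc1 : 2 ≤ c₁ := by
    rw [hc1def]
    have : 0 < 8 / (q - 1) := by positivity
    linarith
  have hc1' : 0 < c₁ := by linarith
  clear_value p c₀ c₁
  refine ⟨max ((q-1) * c₁) (1 / ((q-1) * c₀)),
    lt_max_of_lt_right (one_div_pos.2 (mul_pos hq1 hc0)), ?_⟩
  set C : ℝ := max ((q-1) * c₁) (1 / ((q-1) * c₀)) with hCdef
  have hCpos : 0 < C := lt_max_of_lt_right (one_div_pos.2 (mul_pos hq1 hc0))
  have hC1 : 1 / C ≤ (q - 1) * c₀ := by
    rw [div_le_iff₀ hCpos]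
    calc (1:ℝ) = ((q-1)*c₀) * (1 / ((q-1)*c₀)) := by
          field_simp
    _ ≤ ((q-1)*c₀) * C := by
        exact mul_le_mul_of_nonneg_left (le_max_right _ _) (mul_pos hq1 hc0).le
    _ = (q-1) * c₀ * C := by ring
  have hC2 : (q - 1) * c₁ ≤ C := le_max_left _ _
  clear_value C
  intro l k
  have hint : ∀ a b : ℝ, IntervalIntegrable (fun s : ℝ => |s| ^ p * max (s - k) 0) volume a b :=
    fun a b => int_f hp k a b
  by_cases hlk : l ≤ k
  · have hmax : max (l - k) 0 = 0 := max_eq_right (by linarith)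
    have hI : (∫ s in k..l, |s| ^ p * max (s - k) 0) = 0 := by
      rw [intervalIntegral.integral_symm l k]
      rw [intervalIntegral.integral_congr (g := fun _ => (0:ℝ)) ?_]
      · simp
      · intro x hx
        rw [Set.uIcc_of_le hlk] at hx
        show |x| ^ p * max (x - k) 0 = 0
        rw [max_eq_right (by linarith [hx.2] : x - k ≤ 0), mul_zero]
    rw [hI, hmax]
    norm_num
  · push_neg at hlk
    set m : ℝ := l - k with hmdef
    have hm : 0 < m := by rw [hmdef]; linarith
    have hM : 0 < |l| + |k| := by
      have h1 := le_abs_self l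
      have h2 := neg_abs_le k
      rw [hmdef] at hm
      linarith
    set M : ℝ := |l| + |k| with hMdef
    have hmax : max m 0 = m := max_eq_left hm.le
    have hmM : m ≤ M := by
      have h1 := le_abs_self l
      have h2 := neg_abs_le k
      rw [hmdef, hMdef]; linarith
    clear_value m M
    have hMp : 0 < M ^ p := Real.rpow_pos_of_pos hM p
    have hMm2 : 0 ≤ M ^ p * m ^ 2 := by positivity
    have hM4 : (0:ℝ) < M / 4 := by linarith
    have hfnonneg : ∀ u : ℝ, 0 ≤ |u| ^ p * max (u - k) 0 := fun u =>
      mul_nonneg (Real.rpow_nonneg (abs_nonneg _) _) (le_max_right _ _)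
    have hIg : ∀ a b c : ℝ, (∫ s in a..b, c * (s - k)) = c * ((b-k)^2/2 - (a-k)^2/2) :=
      fun a b c => by rw [intervalIntegral.integral_const_mul, int_linear]
    have h6 : (M/4) ^ p ≤ 4 * M ^ p := by
      rw [Real.div_rpow hM.le (by norm_num : (0:ℝ) ≤ 4)]
      rw [div_le_iff₀ (Real.rpow_pos_of_pos (by norm_num) p)]
      have h44 : (4:ℝ)^(-1:ℝ) ≤ (4:ℝ)^p :=
        Real.rpow_le_rpow_of_exponent_le (by norm_num) (by linarith)
      have h45 : (4:ℝ)^(-1:ℝ) = 1/4 := by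
        rw [Real.rpow_neg (by norm_num), Real.rpow_one]
        norm_num
      rw [h45] at h44
      nlinarith [hMp]
    have key_low : c₀ * M ^ p * m ^ 2 ≤ ∫ s in k..l, |s| ^ p * max (s - k) 0 := by
      rcases le_or_gt 0 p with hpp | hpn
      · -- p ≥ 0
        have hc0eq : c₀ * M ^ p = (M/4) ^ p / 32 := by
          rw [hc0def, abs_of_nonneg hpp, Real.div_rpow hM.le (by norm_num : (0:ℝ) ≤ 4),
            Real.rpow_neg (by norm_num : (0:ℝ) ≤ 4)]
          have h4p : (0:ℝ) < (4:ℝ)^p := Real.rpow_pos_of_pos (by norm_num) p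
          field_simp
        have hA4 : (0:ℝ) ≤ (M/4) ^ p := Real.rpow_nonneg hM4.le p
        rcases le_or_gt 0 (k + l) with hA | hB
        · -- Subcase A : mass near l
          have hl0 : 0 < l := by linarith
          have hkabs : |k| ≤ l := abs_le.2 ⟨by linarith, by linarith⟩
          have hMl : M ≤ 2 * l := by rw [hMdef, abs_of_pos hl0]; linarith
          have hml : m ≤ 2 * l := by rw [hmdef]; linarith [neg_abs_le k]
          set t : ℝ := min (m/2) (l/2) with htdef
          have ht0 : 0 < t := lt_min (by linarith) (by linarith)
          have htm : t ≤ m/2 := min_le_left _ _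
          have htl : t ≤ l/2 := min_le_right _ _
          have htq : m/4 ≤ t := le_min (by linarith) (by linarith)
          clear_value t
          have hsplit := intervalIntegral.integral_add_adjacent_intervals
            (hint k (l - t)) (hint (l - t) l)
          have h1 : 0 ≤ ∫ s in k..(l-t), |s| ^ p * max (s - k) 0 :=
            intervalIntegral.integral_nonneg (by linarith) (fun u _ => hfnonneg u)
          have h2 : (∫ _ in (l-t)..l, (M/4) ^ p * (m/2))
              ≤ ∫ s in (l-t)..l, |s| ^ p * max (s - k) 0 := by
            apply intervalIntegral.integral_mono_on (by linarith : l - t ≤ l)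
              intervalIntegrable_const (hint (l-t) l)
            intro s hs
            show (M/4) ^ p * (m/2) ≤ |s| ^ p * max (s - k) 0
            have hs1 : l/2 ≤ s := by linarith [hs.1]
            have hs0 : 0 < s := by linarith
            have hsM : M/4 ≤ |s| := by rw [abs_of_pos hs0]; linarith
            have hr : (M/4) ^ p ≤ |s| ^ p := Real.rpow_le_rpow hM4.le hsM hpp
            have hmx : m/2 ≤ max (s - k) 0 := by
              rw [max_eq_left (by linarith [hs.1] : (0:ℝ) ≤ s - k)]
              linarith [hs.1]
            exact mul_le_mul hr hmx (by linarith) (Real.rpow_nonneg (abs_nonneg _) _)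
          have h2' : (∫ _ in (l-t)..l, (M/4) ^ p * (m/2)) = t * ((M/4) ^ p * (m/2)) := by
            rw [intervalIntegral.integral_const, smul_eq_mul]
            ring_nf
          rw [h2'] at h2
          have hfin : c₀ * M ^ p * m ^ 2 ≤ t * ((M/4) ^ p * (m/2)) := by
            rw [hc0eq]
            nlinarith [mul_nonneg (mul_nonneg hA4 (by linarith : (0:ℝ) ≤ m/2))
              (by linarith : (0:ℝ) ≤ t - m/4), mul_nonneg hA4 (sq_nonneg m)]
          rw [← hsplit]
          exact (hfin.trans h2).trans (le_add_of_nonneg_left h1)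
        · -- Subcase B : mass near k
          have hk0 : k < 0 := by linarith
          have hlabs : |l| ≤ -k := abs_le.2 ⟨by linarith, by linarith⟩
          have hMk : M ≤ -2*k := by rw [hMdef, abs_of_neg hk0]; linarith
          have hmk : m ≤ -2*k := by rw [hmdef]; linarith [le_abs_self l]
          set t : ℝ := min (m/2) (-k/2) with htdef
          have ht0 : 0 < t := lt_min (by linarith) (by linarith)
          have htm : t ≤ m/2 := min_le_left _ _
          have htk : t ≤ -k/2 := min_le_right _ _
          have htq : m/4 ≤ t := le_min (by linarith) (by linarith)
          clear_value t
          have hsplit := intervalIntegral.integral_add_adjacent_intervals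
            (hint k (k + t)) (hint (k + t) l)
          have h1 : 0 ≤ ∫ s in (k+t)..l, |s| ^ p * max (s - k) 0 :=
            intervalIntegral.integral_nonneg (by linarith) (fun u _ => hfnonneg u)
          have h2 : (∫ s in k..(k+t), (M/4) ^ p * (s - k))
              ≤ ∫ s in k..(k+t), |s| ^ p * max (s - k) 0 := by
            apply intervalIntegral.integral_mono_on (by linarith : k ≤ k + t)
              ((continuous_const.mul (continuous_id.sub continuous_const)).intervalIntegrable _ _)
              (hint k (k+t))
            intro s hs
            show (M/4) ^ p * (s - k) ≤ |s| ^ p * max (s - k) 0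
            have hs2 : s ≤ k/2 := by linarith [hs.2]
            have hs0 : s < 0 := by linarith
            have hsM : M/4 ≤ |s| := by rw [abs_of_neg hs0]; linarith
            have hr : (M/4) ^ p ≤ |s| ^ p := Real.rpow_le_rpow hM4.le hsM hpp
            rw [max_eq_left (by linarith [hs.1] : (0:ℝ) ≤ s - k)]
            exact mul_le_mul_of_nonneg_right hr (by linarith [hs.1])
          rw [hIg] at h2
          have he : (M/4) ^ p * (((k+t)-k)^2/2 - (k-k)^2/2) = (M/4) ^ p * (t^2/2) := by ring
          rw [he] at h2
          have ht2 : m^2/16 ≤ t^2 := by nlinarith [htq, hm]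
          have hfin : c₀ * M ^ p * m ^ 2 ≤ (M/4) ^ p * (t^2/2) := by
            rw [hc0eq]
            nlinarith [mul_nonneg hA4 (by linarith : (0:ℝ) ≤ t^2 - m^2/16)]
          rw [← hsplit]
          exact (hfin.trans h2).trans (le_add_of_nonneg_right h1)
      · -- p < 0
        have hg : IntervalIntegrable (fun s : ℝ => M ^ p * (s - k)) volume k l :=
          (continuous_const.mul (continuous_id.sub continuous_const)).intervalIntegrable _ _
        have hmono : (∫ s in k..l, M ^ p * (s - k)) ≤ ∫ s in k..l, |s| ^ p * max (s - k) 0 := by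
          apply mono_off_zero hlk.le hg (hint k l)
          intro s hs hs0
          show M ^ p * (s - k) ≤ |s| ^ p * max (s - k) 0
          have hsub : (0:ℝ) ≤ s - k := by linarith [hs.1]
          rw [max_eq_left hsub]
          apply mul_le_mul_of_nonneg_right ?_ hsub
          apply Real.rpow_le_rpow_of_nonpos (abs_pos.2 hs0) ?_ hpn.le
          exact abs_le.2 ⟨by linarith [neg_abs_le k, abs_nonneg l, hs.1],
            by linarith [le_abs_self l, abs_nonneg k, hs.2]⟩
        rw [hIg] at hmono
        have hc0le : c₀ ≤ 1/32 := by
          rw [hc0def]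
          have h41 : (4:ℝ)^(-|p|) ≤ 1 :=
            Real.rpow_le_one_of_one_le_of_nonpos (by norm_num) (neg_nonpos.2 (abs_nonneg _))
          linarith
        have hmm : M ^ p * ((l-k)^2/2 - (k-k)^2/2) = M ^ p * m^2/2 := by
          rw [hmdef]; ring
        rw [hmm] at hmono
        nlinarith [mul_le_mul_of_nonneg_right hc0le hMm2, hmono, hMm2]
    have key_up : (∫ s in k..l, |s| ^ p * max (s - k) 0) ≤ c₁ * M ^ p * m ^ 2 := by
      rcases le_or_gt 0 p with hpp | hpn
      · -- p ≥ 0 : easy upper bound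
        have hg : IntervalIntegrable (fun s : ℝ => M ^ p * (s - k)) volume k l :=
          (continuous_const.mul (continuous_id.sub continuous_const)).intervalIntegrable _ _
        have hmono : (∫ s in k..l, |s| ^ p * max (s - k) 0) ≤ ∫ s in k..l, M ^ p * (s - k) := by
          apply intervalIntegral.integral_mono_on hlk.le (hint k l) hg
          intro s hs
          show |s| ^ p * max (s - k) 0 ≤ M ^ p * (s - k)
          have habs : |s| ≤ M := abs_le.2 ⟨by linarith [neg_abs_le k, abs_nonneg l, hs.1],
            by linarith [le_abs_self l, abs_nonneg k, hs.2]⟩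
          rw [max_eq_left (by linarith [hs.1] : (0:ℝ) ≤ s - k)]
          exact mul_le_mul_of_nonneg_right (Real.rpow_le_rpow (abs_nonneg _) habs hpp)
            (by linarith [hs.1])
        rw [hIg] at hmono
        have hmm : M ^ p * ((l-k)^2/2 - (k-k)^2/2) = M ^ p * m^2/2 := by
          rw [hmdef]; ring
        rw [hmm] at hmono
        linarith [hmono, mul_le_mul_of_nonneg_right (show (1:ℝ)/2 ≤ c₁ by linarith) hMm2]
      · rcases le_or_gt m (M/4) with hsm | hbig
        · -- m small : |s| ≥ M/4 on the whole interval
          have hg : IntervalIntegrable (fun s : ℝ => (4 * M ^ p) * (s - k)) volume k l :=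
            (continuous_const.mul (continuous_id.sub continuous_const)).intervalIntegrable _ _
          have hmono : (∫ s in k..l, |s| ^ p * max (s - k) 0)
              ≤ ∫ s in k..l, (4 * M ^ p) * (s - k) := by
            apply intervalIntegral.integral_mono_on hlk.le (hint k l) hg
            intro s hs
            show |s| ^ p * max (s - k) 0 ≤ (4 * M ^ p) * (s - k)
            have e1 : |l| - |s| ≤ |l - s| := abs_sub_abs_le_abs_sub l s
            have e2 : |k| - |s| ≤ |k - s| := abs_sub_abs_le_abs_sub k s
            have e3 : |l - s| = l - s := abs_of_nonneg (by linarith [hs.2])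
            have e4 : |k - s| = s - k := by
              rw [abs_sub_comm]; exact abs_of_nonneg (by linarith [hs.1])
            have hsM : M/4 ≤ |s| := by
              rw [e3] at e1; rw [e4] at e2
              linarith [e1, e2, hsm, hs.1, hs.2, hMdef, hmdef]
            have h5 : |s| ^ p ≤ (M/4) ^ p :=
              Real.rpow_le_rpow_of_nonpos hM4 hsM hpn.le
            rw [max_eq_left (by linarith [hs.1] : (0:ℝ) ≤ s - k)]
            exact mul_le_mul_of_nonneg_right (h5.trans h6) (by linarith [hs.1])
          rw [hIg] at hmono
          have hmm : (4 * M ^ p) * ((l-k)^2/2 - (k-k)^2/2) = 2 * (M ^ p * m^2) := by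
            rw [hmdef]; ring
          rw [hmm] at hmono
          linarith [hmono, mul_le_mul_of_nonneg_right (show (2:ℝ) ≤ c₁ from hc1) hMm2]
        · -- m large compared to M
          have h8 : (∫ s in k..l, |s| ^ p * max (s - k) 0) ≤ ∫ s in k..l, |s| ^ p * m := by
            apply intervalIntegral.integral_mono_on hlk.le (hint k l)
              ((int_abs_rpow hp k l).mul_const m)
            intro s hs
            show |s| ^ p * max (s - k) 0 ≤ |s| ^ p * m
            exact mul_le_mul_of_nonneg_left (max_le (by linarith [hs.2]) hm.le)
              (Real.rpow_nonneg (abs_nonneg _) _)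
          have h9 : (∫ s in k..l, |s| ^ p * m) = (∫ s in k..l, |s| ^ p) * m :=
            intervalIntegral.integral_mul_const m _
          have h10 := rpow_int_total hp hpn hlk.le
          rw [← hmdef] at h10
          have hp1 : 0 < p + 1 := by linarith
          have hq1p : p + 1 = q - 1 := by rw [hpdef]; ring
          have hm1 : m ^ (p+1) = m ^ p * m := by rw [Real.rpow_add_one hm.ne' p]
          have hmp4 : m ^ p ≤ 4 * M ^ p :=
            (Real.rpow_le_rpow_of_nonpos hM4 hbig.le hpn.le).trans h6
          have h83 : 8/(p+1) ≤ c₁ := by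
            rw [hq1p, hc1def]; linarith
          have hne : p + 1 ≠ 0 := by linarith
          calc (∫ s in k..l, |s| ^ p * max (s - k) 0)
              ≤ (∫ s in k..l, |s| ^ p) * m := by rw [← h9]; exact h8
          _ ≤ (2 * (m ^ (p+1) / (p+1))) * m := mul_le_mul_of_nonneg_right h10 hm.le
          _ = 2 * (m ^ p) * m^2 / (p+1) := by rw [hm1]; ring
          _ ≤ 2 * (4 * M ^ p) * m^2 / (p+1) := by
              apply div_le_div_of_nonneg_right ?_ hp1.le
              nlinarith [hmp4, sq_nonneg m]
          _ = 8/(p+1) * (M ^ p * m^2) := by field_simp; ring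
          _ ≤ c₁ * (M ^ p * m ^ 2) := mul_le_mul_of_nonneg_right h83 hMm2
          _ = c₁ * M ^ p * m ^ 2 := by ring
    rw [hmax]
    constructor
    · calc 1 / C * M ^ p * m ^ 2 ≤ ((q-1) * c₀) * M ^ p * m ^ 2 := by
            rcases mul_le_mul_of_nonneg_right hC1 hMm2 with h
            calc 1 / C * M ^ p * m ^ 2 = 1 / C * (M ^ p * m ^ 2) := by ring
            _ ≤ (q-1) * c₀ * (M ^ p * m ^ 2) := h
            _ = ((q-1) * c₀) * M ^ p * m ^ 2 := by ring
      _ = (q - 1) * (c₀ * M ^ p * m ^ 2) := by ring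
      _ ≤ (q - 1) * ∫ s in k..l, |s| ^ p * max (s - k) 0 :=
            mul_le_mul_of_nonneg_left key_low hq1.le
    · calc (q - 1) * (∫ s in k..l, |s| ^ p * max (s - k) 0)
            ≤ (q - 1) * (c₁ * M ^ p * m ^ 2) := mul_le_mul_of_nonneg_left key_up hq1.le
      _ = ((q-1) * c₁) * (M ^ p * m ^ 2) := by ring
      _ ≤ C * (M ^ p * m ^ 2) := mul_le_mul_of_nonneg_right hC2 hMm2
      _ = C * M ^ p * m ^ 2 := by ring
end

section
/- Let 𝔮 ≥ 1, a, b ≥ 0 and θ ∈ [0,1]. Then (a+b)^𝔮 - a^𝔮 ≥ θ 𝔮 a^{𝔮-1} b + (1-θ) b^𝔮. -/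
theorem stmt_3 (𝔮 a b θ : ℝ) (h𝔮 : 1 ≤ 𝔮) (ha : 0 ≤ a) (hb : 0 ≤ b)
    (hθ0 : 0 ≤ θ) (hθ1 : θ ≤ 1) :
    θ * 𝔮 * a ^ (𝔮 - 1) * b + (1 - θ) * b ^ 𝔮 ≤ (a + b) ^ 𝔮 - a ^ 𝔮 := by
  have h2 : a ^ 𝔮 + b ^ 𝔮 ≤ (a + b) ^ 𝔮 := by
    have := NNReal.add_rpow_le_rpow_add ⟨a, ha⟩ ⟨b, hb⟩ h𝔮
    have h := NNReal.coe_le_coe.2 this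
    push_cast at h
    simpa using (show ((⟨a, ha⟩ : NNReal) : ℝ) ^ 𝔮 + ((⟨b, hb⟩ : NNReal) : ℝ) ^ 𝔮 ≤ (((⟨a, ha⟩ : NNReal) : ℝ) + ((⟨b, hb⟩ : NNReal) : ℝ)) ^ 𝔮 by exact_mod_cast this)
  have h1 : a ^ 𝔮 + 𝔮 * a ^ (𝔮 - 1) * b ≤ (a + b) ^ 𝔮 := by
    rcases eq_or_lt_of_le ha with h0 | h0
    · rcases eq_or_lt_of_le h𝔮 with hq1 | hq1
      · simp [← h0, ← hq1]
      · rw [← h0]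
        rw [Real.zero_rpow (by linarith), Real.zero_rpow (by linarith)]
        simpa using Real.rpow_nonneg hb 𝔮
    · have hber := one_add_mul_self_le_rpow_one_add (s := b / a)
        (by linarith [div_nonneg hb h0.le]) h𝔮
      have key : a ^ 𝔮 * (1 + 𝔮 * (b / a)) ≤ a ^ 𝔮 * (1 + b / a) ^ 𝔮 := by
        apply mul_le_mul_of_nonneg_left hber (by positivity)
      have e1 : a ^ 𝔮 * (1 + b / a) ^ 𝔮 = (a + b) ^ 𝔮 := by
        rw [← Real.mul_rpow h0.le (by positivity)]
        congr 1; field_simp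
      have e2 : a ^ 𝔮 * (1 + 𝔮 * (b / a)) = a ^ 𝔮 + 𝔮 * a ^ (𝔮 - 1) * b := by
        have : a ^ (𝔮 - 1) = a ^ 𝔮 / a := by
          rw [Real.rpow_sub h0, Real.rpow_one]
        rw [this]; field_simp
      linarith [key.trans_eq e1, e2 ▸ key.trans_eq e1]
  nlinarith [mul_le_mul_of_nonneg_left h1 hθ0, mul_le_mul_of_nonneg_left h2 (by linarith : (0:ℝ) ≤ 1 - θ)]
end

section
/- Let 𝔮 ≥ 1 and a ≥ b ≥ 0. Then for every ε > 0: a^𝔮 - b^𝔮 ≤ ε a^𝔮 + ((𝔮-1)/ε)^{𝔮-1} (a - b)^𝔮. -/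
theorem stmt_4 (𝔮 a b ε : ℝ) (h𝔮 : 1 ≤ 𝔮) (hb : 0 ≤ b) (hab : b ≤ a) (hε : 0 < ε) :
    a ^ 𝔮 - b ^ 𝔮 ≤ ε * a ^ 𝔮 + ((𝔮 - 1) / ε) ^ (𝔮 - 1) * (a - b) ^ 𝔮 := by
  have ha : 0 ≤ a := le_trans hb hab
  rcases eq_or_lt_of_le h𝔮 with hq1 | hq1
  · -- q = 1
    subst hq1
    simp only [sub_self, Real.rpow_one, zero_div, Real.rpow_zero]
    nlinarith [mul_nonneg hε.le ha]
  · -- q > 1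
    rcases eq_or_lt_of_le ha with ha0 | ha0
    · -- a = 0, hence b = 0
      have hb0 : b = 0 := le_antisymm (ha0 ▸ hab) hb
      subst hb0
      rw [← ha0]
      have h0 : (0:ℝ) ^ 𝔮 = 0 := Real.zero_rpow (by positivity)
      simp [h0]
    · -- a > 0
      have hq0 : 0 < 𝔮 := lt_of_lt_of_le one_pos h𝔮
      have hq1' : 0 < 𝔮 - 1 := by linarith
      -- Step 1: Bernoulli
      have hs : (-1:ℝ) ≤ b / a - 1 := by
        have : 0 ≤ b / a := div_nonneg hb ha
        linarith
      have hB := one_add_mul_self_le_rpow_one_add hs h𝔮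
      have hB' : (1 + 𝔮 * (b / a - 1)) * a ^ 𝔮 ≤ b ^ 𝔮 := by
        calc (1 + 𝔮 * (b / a - 1)) * a ^ 𝔮 ≤ (1 + (b / a - 1)) ^ 𝔮 * a ^ 𝔮 :=
              mul_le_mul_of_nonneg_right hB (Real.rpow_nonneg ha 𝔮)
          _ = b ^ 𝔮 := by
              rw [show 1 + (b / a - 1) = b / a by ring,
                ← Real.mul_rpow (div_nonneg hb ha) ha, div_mul_cancel₀ _ (ne_of_gt ha0)]
      have key : (1 + 𝔮 * (b / a - 1)) * a ^ 𝔮 = a ^ 𝔮 + 𝔮 * a ^ (𝔮 - 1) * (b - a) := by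
        rw [Real.rpow_sub_one (ne_of_gt ha0)]
        field_simp
      have h1 : a ^ 𝔮 - b ^ 𝔮 ≤ 𝔮 * a ^ (𝔮 - 1) * (a - b) := by
        rw [key] at hB'; linarith
      -- Step 2: weighted AM-GM
      set X : ℝ := 𝔮 * ε / (𝔮 - 1) with hX
      set Y : ℝ := (𝔮 - 1) / ε with hY
      have hXpos : 0 < X := by positivity
      have hYpos : 0 < Y := by positivity
      have hXY : X * Y = 𝔮 := by rw [hX, hY]; field_simp
      set w₁ : ℝ := (𝔮 - 1) / 𝔮 with hw₁
      set w₂ : ℝ := 1 / 𝔮 with hw₂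
      have hwsum : w₁ + w₂ = 1 := by rw [hw₁, hw₂]; field_simp; ring
      set p₁ : ℝ := X * a ^ 𝔮 with hp₁
      set p₂ : ℝ := 𝔮 * Y ^ (𝔮 - 1) * (a - b) ^ 𝔮 with hp₂
      have hab' : 0 ≤ a - b := sub_nonneg.mpr hab
      have hp₁0 : 0 ≤ p₁ := by positivity
      have hp₂0 : 0 ≤ p₂ := by positivity
      have hAM := Real.geom_mean_le_arith_mean2_weighted
        (le_of_lt (by positivity : (0:ℝ) < w₁)) (by positivity) hp₁0 hp₂0 hwsum
      have hgeom : p₁ ^ w₁ * p₂ ^ w₂ = 𝔮 * a ^ (𝔮 - 1) * (a - b) := by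
        rw [hp₁, hp₂, Real.mul_rpow hXpos.le (Real.rpow_nonneg ha 𝔮),
          Real.mul_rpow (by positivity) (Real.rpow_nonneg hab' 𝔮),
          Real.mul_rpow hq0.le (Real.rpow_nonneg hYpos.le _)]
        rw [← Real.rpow_mul ha, ← Real.rpow_mul hab', ← Real.rpow_mul hYpos.le]
        have e1 : 𝔮 * w₁ = 𝔮 - 1 := by rw [hw₁]; field_simp
        have e2 : 𝔮 * w₂ = 1 := by rw [hw₂]; field_simp
        have e3 : (𝔮 - 1) * w₂ = w₁ := by rw [hw₂, hw₁]; field_simp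
        rw [e1, e2, e3, Real.rpow_one]
        have : X ^ w₁ * (𝔮 ^ w₂ * Y ^ w₁) = 𝔮 := by
          rw [show X ^ w₁ * (𝔮 ^ w₂ * Y ^ w₁) = X ^ w₁ * Y ^ w₁ * 𝔮 ^ w₂ by ring,
            ← Real.mul_rpow hXpos.le hYpos.le, hXY, ← Real.rpow_add hq0, hwsum,
            Real.rpow_one]
        calc X ^ w₁ * a ^ (𝔮 - 1) * (𝔮 ^ w₂ * Y ^ w₁ * (a - b))
            = X ^ w₁ * (𝔮 ^ w₂ * Y ^ w₁) * a ^ (𝔮 - 1) * (a - b) := by ring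
          _ = 𝔮 * a ^ (𝔮 - 1) * (a - b) := by rw [this]
      have harith : w₁ * p₁ + w₂ * p₂ = ε * a ^ 𝔮 + Y ^ (𝔮 - 1) * (a - b) ^ 𝔮 := by
        rw [hp₁, hp₂, hw₁, hw₂, hX]
        field_simp
      rw [hgeom, harith] at hAM
      linarith
end
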